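/- arXiv:2102.11079 — 3 statements merged into one kernel-verified Lean document; each statement's English description precedes it below -/
import Mathlib

section
/- Let 0 < λ₂ < λ₁ and χ = λ₁/λ₂, and define the shifted Chebyshev polynomial T̃_n(t) = T_n((λ₁+λ₂−2t)/(λ₁−λ₂)) / T_n((λ₁+λ₂)/(λ₁−λ₂)), where T_n is the Chebyshev polynomial of the first kind. Then max over t ∈ [λ₂, λ₁] of |T̃_n(t)| equals 2ζⁿ/(1+ζ²ⁿ), where ζ = (√χ − 1)/(√χ + 1) < 1. -/
lemma T_real_cosh (t : ℝ) (n : ℤ) :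
    (Polynomial.Chebyshev.T ℝ n).eval (Real.cosh t) = Real.cosh (n * t) := by
  have h := Polynomial.Chebyshev.T_complex_cos ((t : ℂ) * Complex.I) n
  rw [Complex.cos_mul_I] at h
  have h2 : ((n : ℂ) * ((t : ℂ) * Complex.I)) = ((n * t : ℝ) : ℂ) * Complex.I := by
    push_cast; ring
  rw [h2, Complex.cos_mul_I] at h
  have h3 := Polynomial.Chebyshev.complex_ofReal_eval_T (Real.cosh t) n
  rw [Complex.ofReal_cosh] at h3
  rw [← h3, ← Complex.ofReal_cosh] at h
  exact_mod_cast h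

lemma T_abs_le_one (x : ℝ) (hx : x ∈ Set.Icc (-1:ℝ) 1) (n : ℤ) :
    |(Polynomial.Chebyshev.T ℝ n).eval x| ≤ 1 := by
  have h := Polynomial.Chebyshev.T_real_cos (Real.arccos x) n
  rw [Real.cos_arccos hx.1 hx.2] at h
  rw [h]
  exact Real.abs_cos_le_one _

lemma T_eval_one' (n : ℤ) : (Polynomial.Chebyshev.T ℝ n).eval 1 = 1 := by
  have h := Polynomial.Chebyshev.T_real_cos 0 n
  simpa using h

/-- The maximum of the shifted Chebyshev polynomial `T̃_n` on `[λ₂, λ₁]` equals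
`2ζⁿ/(1+ζ^{2n})` with `ζ = (√χ−1)/(√χ+1)`, `χ = λ₁/λ₂`. -/
theorem shifted_chebyshev_max (lam1 lam2 : ℝ) (h2 : 0 < lam2) (h12 : lam2 < lam1)
    (n : ℕ) (hn : 1 ≤ n) :
    let χ := lam1 / lam2
    let ζ := (Real.sqrt χ - 1) / (Real.sqrt χ + 1)
    let Tt : ℝ → ℝ := fun t =>
      (Polynomial.Chebyshev.T ℝ n).eval ((lam1 + lam2 - 2 * t) / (lam1 - lam2)) /
        (Polynomial.Chebyshev.T ℝ n).eval ((lam1 + lam2) / (lam1 - lam2))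
    ζ < 1 ∧
      IsGreatest ((fun t => |Tt t|) '' Set.Icc lam2 lam1)
        (2 * ζ ^ n / (1 + ζ ^ (2 * n))) := by
  intro χ ζ Tt
  have hχ : 1 < χ := (one_lt_div h2).2 h12
  set s := Real.sqrt χ with hs
  have hs1 : 1 < s := by
    have := Real.sqrt_lt_sqrt (by norm_num) hχ
    simpa [hs] using this
  have hζ0 : 0 < ζ := div_pos (by linarith) (by linarith)
  have hζ1 : ζ < 1 := by
    rw [show ζ = (s - 1) / (s + 1) from rfl, div_lt_one (by linarith)]; linarith
  have hd : (0:ℝ) < lam1 - lam2 := by linarith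
  -- θ and the cosh identity
  set θ := Real.log ζ with hθ
  have hexp : Real.exp θ = ζ := Real.exp_log hζ0
  have hs2 : s ^ 2 = χ := Real.sq_sqrt (by positivity)
  have hχdef : χ * lam2 = lam1 := by
    rw [show χ = lam1 / lam2 from rfl]; field_simp
  have hc : (lam1 + lam2) / (lam1 - lam2) = Real.cosh θ := by
    rw [Real.cosh_eq, Real.exp_neg, hexp]
    rw [show ζ = (s - 1) / (s + 1) from rfl, inv_div]
    rw [div_add_div _ _ (by intro h; nlinarith : s + 1 ≠ 0) (by intro h; nlinarith : s - 1 ≠ 0), div_div]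
    rw [div_eq_div_iff (ne_of_gt hd) (by intro h; nlinarith)]
    linear_combination 4 * lam2 * hs2 + 4 * hχdef
  have hMn : (Polynomial.Chebyshev.T ℝ (n:ℤ)).eval ((lam1 + lam2) / (lam1 - lam2))
      = (ζ ^ n + (ζ ^ n)⁻¹) / 2 := by
    rw [hc, T_real_cosh, Real.cosh_eq]
    rw [show ((n : ℤ) : ℝ) * θ = (n : ℝ) * θ by push_cast; ring]
    rw [Real.exp_nat_mul, hexp, show -((n:ℝ) * θ) = (n:ℝ) * (-θ) by ring,
      Real.exp_nat_mul, Real.exp_neg, hexp, inv_pow]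
  have hζn : 0 < ζ ^ n := pow_pos hζ0 n
  have hMpos : 0 < (ζ ^ n + (ζ ^ n)⁻¹) / 2 := by positivity
  have hV : 2 * ζ ^ n / (1 + ζ ^ (2 * n)) = ((ζ ^ n + (ζ ^ n)⁻¹) / 2)⁻¹ := by
    have h1 : ζ ^ n ≠ 0 := ne_of_gt hζn
    have h2' : (1:ℝ) + (ζ ^ n) ^ 2 ≠ 0 := by positivity
    have h3 : ζ ^ n + (ζ ^ n)⁻¹ ≠ 0 := by positivity
    rw [pow_mul']
    field_simp
    ring
  refine ⟨hζ1, ?_, ?_⟩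
  · -- membership at t = lam2
    refine ⟨lam2, Set.left_mem_Icc.2 (le_of_lt h12), ?_⟩
    have hx : (lam1 + lam2 - 2 * lam2) / (lam1 - lam2) = 1 := by
      rw [div_eq_one_iff_eq (ne_of_gt hd)]; ring
    show |Tt lam2| = _
    rw [show Tt lam2 = (Polynomial.Chebyshev.T ℝ (n:ℤ)).eval ((lam1 + lam2 - 2 * lam2) / (lam1 - lam2)) /
        (Polynomial.Chebyshev.T ℝ (n:ℤ)).eval ((lam1 + lam2) / (lam1 - lam2)) from rfl]
    rw [hx, T_eval_one', hMn, hV, abs_of_pos (by positivity), one_div]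
  · -- upper bound
    rintro y ⟨t, ht, rfl⟩
    have hx1 : (lam1 + lam2 - 2 * t) / (lam1 - lam2) ≤ 1 := by
      rw [div_le_one hd]; linarith [ht.1]
    have hx2 : -1 ≤ (lam1 + lam2 - 2 * t) / (lam1 - lam2) := by
      rw [le_div_iff₀ hd]; linarith [ht.2]
    have hb := T_abs_le_one _ ⟨hx2, hx1⟩ (n : ℤ)
    show |Tt t| ≤ _
    rw [show Tt t = (Polynomial.Chebyshev.T ℝ (n:ℤ)).eval ((lam1 + lam2 - 2 * t) / (lam1 - lam2)) /
        (Polynomial.Chebyshev.T ℝ (n:ℤ)).eval ((lam1 + lam2) / (lam1 - lam2)) from rfl]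
    rw [abs_div, hMn, abs_of_pos hMpos, hV, inv_eq_one_div ((ζ ^ n + (ζ ^ n)⁻¹) / 2)]
    rw [div_le_div_iff_of_pos_right hMpos]
    exact hb
end

section
/- Let χ ≥ 1 and ζ = (√χ − 1)/(√χ + 1). If N ≥ √χ and χ > 1, then 2ζᴺ/(1 + ζ²ᴺ) < 0.266. -/
/-! The substitution `u = 1/√χ` turns `ζ` into `(1 - u)/(1 + u)`, and the series of
`log (1 + u) - log (1 - u)` starts with `2u` and has nonnegative terms, so `ζ ≤ exp (-2/√χ)` and
`ζᴺ ≤ e⁻²` once `N ≥ √χ`. Since `x ↦ 2x/(1 + x²)` increases on `[-1, 1]`, the quantity is at most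
its value at `e⁻² < 0.1354`. -/

open Real

theorem two_mul_le_log_one_add_sub_log_one_sub {u : ℝ} (hu₀ : 0 ≤ u) (hu₁ : u < 1) :
    2 * u ≤ log (1 + u) - log (1 - u) := by
  have hsum := hasSum_log_sub_log_of_abs_lt_one (abs_lt.2 ⟨by linarith, hu₁⟩)
  simpa using le_hasSum hsum 0 fun k _ => by positivity

theorem div_le_exp_neg_two_div {t : ℝ} (ht : 1 < t) : (t - 1) / (t + 1) ≤ exp (-2 / t) := by
  have ht₀ : 0 < t := by linarith
  have hlog := two_mul_le_log_one_add_sub_log_one_sub (u := 1 / t) (by positivity)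
    ((div_lt_one ht₀).2 ht)
  have hsub : log (1 + 1 / t) - log (1 - 1 / t) = log (t + 1) - log (t - 1) := by
    rw [← log_div (by positivity) (by simp [sub_eq_zero, ht.ne']),
      ← log_div (by linarith) (by linarith)]
    congr 1
    field_simp
  rw [← exp_log (show 0 < (t - 1) / (t + 1) by apply div_pos <;> linarith),
    log_div (by linarith) (by linarith)]
  gcongr
  linarith [show -2 / t = -(2 * (1 / t)) by ring]

theorem monotoneOn_two_mul_div_one_add_sq :
    MonotoneOn (fun x : ℝ => 2 * x / (1 + x ^ 2)) (Set.Icc (-1) 1) := by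
  rintro x ⟨hx₁, hx₂⟩ y ⟨hy₁, hy₂⟩ hxy
  dsimp only
  rw [div_le_div_iff₀ (by positivity) (by positivity)]
  have hxy₁ : x * y ≤ 1 := by nlinarith
  nlinarith [mul_nonneg (sub_nonneg.2 hxy) (sub_nonneg.2 hxy₁)]

theorem exp_neg_two_lt : exp (-2) < 0.1354 := by
  have he : (7.389 : ℝ) < exp 2 := by
    rw [show (2 : ℝ) = 1 + 1 by norm_num, exp_add]
    nlinarith [exp_one_gt_d9]
  rw [exp_neg, inv_lt_comm₀ (exp_pos 2) (by norm_num)]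
  exact lt_trans (by norm_num) he

/-- If `χ > 1` and `N ≥ √χ`, then `2ζᴺ/(1+ζ²ᴺ) < 0.266` where `ζ = (√χ−1)/(√χ+1)`. -/
theorem chebyshev_contraction_bound (χ : ℝ) (hχ : 1 < χ) (N : ℕ)
    (hN : Real.sqrt χ ≤ (N : ℝ)) :
    let ζ := (Real.sqrt χ - 1) / (Real.sqrt χ + 1)
    2 * ζ ^ N / (1 + ζ ^ (2 * N)) < 0.266 := by
  intro ζ
  have ht : 1 < √χ := by rwa [lt_sqrt zero_le_one, one_pow]
  have hζ₀ : 0 ≤ ζ := div_nonneg (by linarith) (by linarith)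
  have hζN : ζ ^ N ≤ exp (-2) :=
    calc ζ ^ N ≤ exp (-2 / √χ) ^ N := pow_le_pow_left₀ hζ₀ (div_le_exp_neg_two_div ht) N
      _ = exp (-2 * (N / √χ)) := by rw [← exp_nat_mul]; ring_nf
      _ ≤ exp (-2) := by
        gcongr
        rw [neg_mul, neg_le_neg_iff, le_mul_iff_one_le_right two_pos,
          one_le_div (by linarith)]
        exact hN
  have hζN₀ : 0 ≤ ζ ^ N := by positivity
  have hle : ζ ^ N ≤ 0.1354 := hζN.trans exp_neg_two_lt.le
  calc 2 * ζ ^ N / (1 + ζ ^ (2 * N)) = 2 * ζ ^ N / (1 + (ζ ^ N) ^ 2) := by rw [pow_mul']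
    _ ≤ 2 * 0.1354 / (1 + 0.1354 ^ 2) :=
      monotoneOn_two_mul_div_one_add_sq ⟨by linarith, by linarith⟩ ⟨by norm_num, by norm_num⟩ hle
    _ < 0.266 := by norm_num
end

section
/- Let K be a p×d matrix, η > 0, θ > 0, α > 0 with ηθ λ_max(KᵀK) ≤ 1. Then the block matrix Q = [[(1/η)I_d, 0], [0, (1/θ)I_p − (η/(1+ηα)) K Kᵀ]] is symmetric positive definite, and for all x ∈ ℝ^d, y ∈ ℝ^p: (1/η)‖x‖² + (ηα/(θ(1+ηα)))‖y‖² ≤ ‖(x,y)‖²_Q ≤ (1/η)‖x‖² + (1/θ)‖y‖². -/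
/-!
The quadratic form of `Q` is `‖x‖²/η + ‖y‖²/θ - η‖Kᵀy‖²/(1+ηα)`, so everything reduces to
`ηθ‖Kᵀy‖² ≤ ‖y‖²`: given it, the subtracted term is at most `‖y‖²/(θ(1+ηα))`, which leaves the
lower bound, and the lower bound is a positive multiple of `‖(x,y)‖²`. That inequality follows
from `ηθλ_max(KᵀK) ≤ 1` once `‖Kᵀy‖² ≤ λ_max(KᵀK)‖y‖²`. The Loewner bound
`KᵀK ≤ λ_max(KᵀK) • 1` gives `‖Kw‖² ≤ λ_max‖w‖²`, and Cauchy–Schwarz transfers this to `Kᵀ`: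
`‖Kᵀy‖⁴ = ⟨y, KKᵀy⟩² ≤ ‖y‖²‖KKᵀy‖² ≤ λ_max‖y‖²‖Kᵀy‖²`.
-/

open Matrix

section

variable {m n : Type*} [Fintype n]

theorem Matrix.dotProduct_self_nonneg {R : Type*} [Ring R] [LinearOrder R] [IsStrictOrderedRing R]
    (v : n → R) : 0 ≤ v ⬝ᵥ v :=
  Finset.sum_nonneg fun i _ => mul_self_nonneg (v i)

open scoped MatrixOrder in
theorem Matrix.IsHermitian.dotProduct_mulVec_le_sSup_spectrum [DecidableEq n]
    {A : Matrix n n ℝ} (hA : A.IsHermitian) (w : n → ℝ) :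
    w ⬝ᵥ A *ᵥ w ≤ sSup (spectrum ℝ A) * (w ⬝ᵥ w) := by
  have hle : A ≤ algebraMap ℝ _ (sSup (spectrum ℝ A)) :=
    le_algebraMap_of_spectrum_le (fun _ hx => le_csSup finite_real_spectrum.bddAbove hx) hA
  have := (le_iff.mp hle).dotProduct_mulVec_nonneg w
  rw [star_trivial, Algebra.algebraMap_eq_smul_one, sub_mulVec, smul_mulVec, one_mulVec,
    dotProduct_sub, dotProduct_smul, smul_eq_mul] at this
  linarith

open scoped MatrixOrder in
theorem Matrix.PosSemidef.sSup_spectrum_nonneg [DecidableEq n] {A : Matrix n n ℝ}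
    (hA : A.PosSemidef) : 0 ≤ sSup (spectrum ℝ A) :=
  Real.sSup_nonneg fun _ hx => spectrum_nonneg_of_nonneg (nonneg_iff_posSemidef.mpr hA) hx

theorem Matrix.transpose_mulVec_dotProduct_self_le [Fintype m] (K : Matrix m n ℝ) {C : ℝ}
    (hC : 0 ≤ C) (hK : ∀ w, K *ᵥ w ⬝ᵥ K *ᵥ w ≤ C * (w ⬝ᵥ w)) (y : m → ℝ) :
    Kᵀ *ᵥ y ⬝ᵥ Kᵀ *ᵥ y ≤ C * (y ⬝ᵥ y) := by
  set w := Kᵀ *ᵥ y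
  have hw : w ⬝ᵥ w = y ⬝ᵥ K *ᵥ w := by
    rw [dotProduct_mulVec y K w, ← mulVec_transpose]
  have hcs : (y ⬝ᵥ K *ᵥ w) ^ 2 ≤ (y ⬝ᵥ y) * (K *ᵥ w ⬝ᵥ K *ᵥ w) := by
    simpa only [dotProduct, sq] using Finset.sum_mul_sq_le_sq_mul_sq Finset.univ y (K *ᵥ w)
  have hyy : 0 ≤ y ⬝ᵥ y := dotProduct_self_nonneg y
  have hsq : (w ⬝ᵥ w) ^ 2 ≤ C * (y ⬝ᵥ y) * (w ⬝ᵥ w) := by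
    calc (w ⬝ᵥ w) ^ 2 ≤ (y ⬝ᵥ y) * (K *ᵥ w ⬝ᵥ K *ᵥ w) := hw ▸ hcs
      _ ≤ (y ⬝ᵥ y) * (C * (w ⬝ᵥ w)) := by gcongr; exact hK w
      _ = C * (y ⬝ᵥ y) * (w ⬝ᵥ w) := by ring
  nlinarith [mul_nonneg hC hyy]

theorem Matrix.transpose_mulVec_dotProduct_self_le_sSup_spectrum [Fintype m] [DecidableEq n]
    (K : Matrix m n ℝ) (y : m → ℝ) :
    Kᵀ *ᵥ y ⬝ᵥ Kᵀ *ᵥ y ≤ sSup (spectrum ℝ (Kᵀ * K)) * (y ⬝ᵥ y) := by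
  have hpsd : (Kᵀ * K).PosSemidef := by
    simpa only [conjTranspose_eq_transpose_of_trivial] using posSemidef_conjTranspose_mul_self K
  refine K.transpose_mulVec_dotProduct_self_le hpsd.sSup_spectrum_nonneg (fun w => ?_) y
  calc K *ᵥ w ⬝ᵥ K *ᵥ w = w ⬝ᵥ (Kᵀ * K) *ᵥ w := by
        rw [← mulVec_mulVec, dotProduct_mulVec w Kᵀ, vecMul_transpose]
    _ ≤ _ := hpsd.isHermitian.dotProduct_mulVec_le_sSup_spectrum w

theorem Matrix.posDef_of_forall_mul_dotProduct_self_le {Q : Matrix n n ℝ} (hQ : Q.IsHermitian)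
    {μ : ℝ} (hμ : 0 < μ) (h : ∀ z, μ * (z ⬝ᵥ z) ≤ z ⬝ᵥ Q *ᵥ z) : Q.PosDef := by
  refine posDef_iff_dotProduct_mulVec.mpr ⟨hQ, fun z hz => ?_⟩
  have hzz : 0 < z ⬝ᵥ z :=
    (dotProduct_self_nonneg z).lt_of_ne' (mt dotProduct_self_eq_zero.mp hz)
  rw [star_trivial]
  exact (mul_pos hμ hzz).trans_le (h z)

variable [DecidableEq m] [DecidableEq n]

noncomputable def primalDualMetric (K : Matrix m n ℝ) (η θ α : ℝ) :
    Matrix (n ⊕ m) (n ⊕ m) ℝ :=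
  fromBlocks ((1 / η) • 1) 0 0 ((1 / θ) • 1 - (η / (1 + η * α)) • (K * Kᵀ))

theorem primalDualMetric_isHermitian (K : Matrix m n ℝ) (η θ α : ℝ) :
    (primalDualMetric K η θ α).IsHermitian :=
  (isHermitian_one.smul (IsSelfAdjoint.all _)).fromBlocks conjTranspose_zero
    ((isHermitian_one.smul (IsSelfAdjoint.all _)).sub
      ((isHermitian_mul_conjTranspose_self K).smul (IsSelfAdjoint.all _)))

theorem sumElim_dotProduct_primalDualMetric_mulVec [Fintype m] (K : Matrix m n ℝ) (η θ α : ℝ)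
    (x : n → ℝ) (y : m → ℝ) :
    Sum.elim x y ⬝ᵥ primalDualMetric K η θ α *ᵥ Sum.elim x y =
      1 / η * (x ⬝ᵥ x) + 1 / θ * (y ⬝ᵥ y) - η / (1 + η * α) * (Kᵀ *ᵥ y ⬝ᵥ Kᵀ *ᵥ y) := by
  have hKKt : y ⬝ᵥ (K * Kᵀ) *ᵥ y = Kᵀ *ᵥ y ⬝ᵥ Kᵀ *ᵥ y := by
    rw [← mulVec_mulVec, dotProduct_mulVec y K, ← mulVec_transpose]
  simp only [primalDualMetric, fromBlocks_mulVec, sumElim_dotProduct_sumElim, Sum.elim_comp_inl,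
    Sum.elim_comp_inr, zero_mulVec, add_zero, zero_add, sub_mulVec, smul_mulVec, one_mulVec,
    dotProduct_sub, dotProduct_smul, smul_eq_mul, hKKt]
  ring

theorem primalDualMetric_quadForm_bounds [Fintype m] {η θ α : ℝ} (hη : 0 < η) (hθ : 0 < θ)
    (hα : 0 < α) (K : Matrix m n ℝ) (hK : ∀ y, η * θ * (Kᵀ *ᵥ y ⬝ᵥ Kᵀ *ᵥ y) ≤ y ⬝ᵥ y)
    (x : n → ℝ) (y : m → ℝ) :
    1 / η * (x ⬝ᵥ x) + η * α / (θ * (1 + η * α)) * (y ⬝ᵥ y) ≤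
        Sum.elim x y ⬝ᵥ primalDualMetric K η θ α *ᵥ Sum.elim x y ∧
      Sum.elim x y ⬝ᵥ primalDualMetric K η θ α *ᵥ Sum.elim x y ≤
        1 / η * (x ⬝ᵥ x) + 1 / θ * (y ⬝ᵥ y) := by
  rw [sumElim_dotProduct_primalDualMetric_mulVec]
  set t := Kᵀ *ᵥ y ⬝ᵥ Kᵀ *ᵥ y
  have h1ηα : 0 < 1 + η * α := by positivity
  have hgap :
      1 / θ * (y ⬝ᵥ y) - η / (1 + η * α) * t - η * α / (θ * (1 + η * α)) * (y ⬝ᵥ y) =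
        (y ⬝ᵥ y - η * θ * t) / (θ * (1 + η * α)) := by
    field_simp
    ring
  have hgap_nonneg : 0 ≤ (y ⬝ᵥ y - η * θ * t) / (θ * (1 + η * α)) :=
    div_nonneg (sub_nonneg.mpr (hK y)) (by positivity)
  have ht : 0 ≤ η / (1 + η * α) * t := mul_nonneg (by positivity) (dotProduct_self_nonneg _)
  constructor <;> linarith

end

/-- Positive definiteness of the primal–dual metric `Q` and the two-sided bound on its
quadratic form, under `ηθ λ_max(KᵀK) ≤ 1`. -/
theorem primal_dual_metric_posdef {d p : ℕ} (K : Matrix (Fin p) (Fin d) ℝ)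
    (η θ α : ℝ) (hη : 0 < η) (hθ : 0 < θ) (hα : 0 < α)
    (hstep : η * θ * sSup (spectrum ℝ (K.transpose * K)) ≤ 1) :
    let Q : Matrix (Fin d ⊕ Fin p) (Fin d ⊕ Fin p) ℝ :=
      Matrix.fromBlocks ((1 / η) • 1) 0 0
        ((1 / θ) • 1 - (η / (1 + η * α)) • (K * K.transpose))
    Q.PosDef ∧
      ∀ (x : Fin d → ℝ) (y : Fin p → ℝ),
        (1 / η) * (x ⬝ᵥ x) + (η * α / (θ * (1 + η * α))) * (y ⬝ᵥ y) ≤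
            Sum.elim x y ⬝ᵥ Q.mulVec (Sum.elim x y) ∧
          Sum.elim x y ⬝ᵥ Q.mulVec (Sum.elim x y) ≤
            (1 / η) * (x ⬝ᵥ x) + (1 / θ) * (y ⬝ᵥ y) := by
  intro Q
  have hK (y : Fin p → ℝ) : η * θ * (Kᵀ *ᵥ y ⬝ᵥ Kᵀ *ᵥ y) ≤ y ⬝ᵥ y := by
    calc η * θ * (Kᵀ *ᵥ y ⬝ᵥ Kᵀ *ᵥ y)
        ≤ η * θ * (sSup (spectrum ℝ (Kᵀ * K)) * (y ⬝ᵥ y)) := by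
          gcongr; exact K.transpose_mulVec_dotProduct_self_le_sSup_spectrum y
      _ = η * θ * sSup (spectrum ℝ (Kᵀ * K)) * (y ⬝ᵥ y) := by ring
      _ ≤ y ⬝ᵥ y := mul_le_of_le_one_left (dotProduct_self_nonneg y) hstep
  have hbounds := primalDualMetric_quadForm_bounds hη hθ hα K hK
  refine ⟨posDef_of_forall_mul_dotProduct_self_le (primalDualMetric_isHermitian K η θ α)
    (μ := min (1 / η) (η * α / (θ * (1 + η * α)))) (by positivity) fun z => ?_, hbounds⟩
  rw [← Sum.elim_comp_inl_inr z, sumElim_dotProduct_sumElim, mul_add]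
  refine le_trans (add_le_add ?_ ?_) (hbounds _ _).1
  · exact mul_le_mul_of_nonneg_right (min_le_left _ _) (dotProduct_self_nonneg _)
  · exact mul_le_mul_of_nonneg_right (min_le_right _ _) (dotProduct_self_nonneg _)
end
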